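/- arXiv:2002.12693 — 5 statements merged into one kernel-verified Lean document; each statement's English description precedes it below -/
import Mathlib

section
/- Uniqueness of the sum-of-binomials representation (Lemma 1): if c, c' : σ → ℤ are integer coefficient families with Σ_{j ∈ σ} (c j) • b j = Σ_{j ∈ σ} (c' j) • b j in R = MvPolynomial (K ⊕ X) ℚ, then c = c'. In particular, each generator of the steady state ideal of a reversible chemical reaction network can be written in exactly one way as an integer linear combination of the binomials associated with the reactions. -/
/-!
The forward monomial `kf j · x^(μ j)` of `b j` occurs in no other binomial, because its rate
constant `kf j` occurs in no other monomial. Hence minus the coefficient of that monomial is a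
linear form taking the value `1` on `b j` and `0` on every other `b i`, so the binomials are
linearly independent over `ℚ`, and therefore over `ℤ`.
-/

open MvPolynomial

theorem Finsupp.mapDomain_inr_apply_inl {α β M : Type*} [AddCommMonoid M] (w : β →₀ M) (a : α) :
    mapDomain Sum.inr w (Sum.inl a) = 0 :=
  mapDomain_of_notMem_range _ _ (by simp)

noncomputable section

namespace ReactionNetwork

variable {K X : Type*}

def reactionExponent (k : K) (w : X →₀ ℕ) : K ⊕ X →₀ ℕ :=
  Finsupp.single (Sum.inl k) 1 + Finsupp.mapDomain Sum.inr w

def reactionBinomial (kf kb : K) (μ ν : X →₀ ℕ) : MvPolynomial (K ⊕ X) ℚ :=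
  monomial (reactionExponent kf μ) (-1) + monomial (reactionExponent kb ν) 1

theorem reactionExponent_apply_inl_self (k : K) (w : X →₀ ℕ) :
    reactionExponent k w (Sum.inl k) = 1 := by
  simp [reactionExponent, Finsupp.mapDomain_inr_apply_inl]

theorem reactionExponent_apply_inl_of_ne {k k' : K} (h : k ≠ k') (w : X →₀ ℕ) :
    reactionExponent k w (Sum.inl k') = 0 := by
  simp [reactionExponent, Finsupp.mapDomain_inr_apply_inl, h]

theorem reactionExponent_ne_of_ne {k k' : K} (h : k ≠ k') (w w' : X →₀ ℕ) :
    reactionExponent k w ≠ reactionExponent k' w' := fun he => by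
  simpa [reactionExponent_apply_inl_self, reactionExponent_apply_inl_of_ne h.symm] using
    DFunLike.congr_fun he (Sum.inl k)

theorem coeff_reactionExponent_reactionBinomial_self {k kb : K} (h : kb ≠ k)
    (μ ν : X →₀ ℕ) :
    coeff (reactionExponent k μ) (reactionBinomial k kb μ ν) = -1 := by
  classical
  rw [reactionBinomial, coeff_add, coeff_monomial, coeff_monomial, if_pos rfl,
    if_neg (reactionExponent_ne_of_ne h _ _), add_zero]

theorem coeff_reactionExponent_reactionBinomial_of_ne {k kf kb : K} (hf : kf ≠ k)
    (hb : kb ≠ k) (w μ ν : X →₀ ℕ) :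
    coeff (reactionExponent k w) (reactionBinomial kf kb μ ν) = 0 := by
  classical
  rw [reactionBinomial, coeff_add, coeff_monomial, coeff_monomial,
    if_neg (reactionExponent_ne_of_ne hf _ _), if_neg (reactionExponent_ne_of_ne hb _ _), add_zero]

theorem linearIndependent_reactionBinomial {σ : Type*} (kf kb : σ → K) (μ ν : σ → X →₀ ℕ)
    (hkf : Function.Injective kf) (hdisj : Disjoint (Set.range kf) (Set.range kb)) :
    LinearIndependent ℚ fun j => reactionBinomial (kf j) (kb j) (μ j) (ν j) := by
  have hkb : ∀ i j, kb i ≠ kf j := fun i j he =>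
    Set.disjoint_right.mp hdisj ⟨i, rfl⟩ ⟨j, he.symm⟩
  refine .of_pairwise_dual_eq_zero_one _ (fun i => -lcoeff ℚ (reactionExponent (kf i) (μ i)))
    (fun i j hij => ?_) (fun i => ?_)
  · simp [coeff_reactionExponent_reactionBinomial_of_ne (hkf.ne hij.symm) (hkb j i)]
  · simp [coeff_reactionExponent_reactionBinomial_self (hkb i i)]

end ReactionNetwork

end

open ReactionNetwork

theorem sum_of_binomials_representation_unique_general
    {K X σ : Type*} [Fintype σ]
    (kf kb : σ → K) (μ ν : σ → (X →₀ ℕ))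
    (hkf : Function.Injective kf)
    (hdisj : Disjoint (Set.range kf) (Set.range kb))
    (b : σ → MvPolynomial (K ⊕ X) ℚ)
    (hb : ∀ j, b j =
      MvPolynomial.monomial
        (Finsupp.single (Sum.inl (kf j)) 1 + Finsupp.mapDomain Sum.inr (μ j)) (-1 : ℚ) +
      MvPolynomial.monomial
        (Finsupp.single (Sum.inl (kb j)) 1 + Finsupp.mapDomain Sum.inr (ν j)) (1 : ℚ))
    (c c' : σ → ℤ)
    (h : ∑ j : σ, (c j) • b j = ∑ j : σ, (c' j) • b j) :
    c = c' := by
  obtain rfl : b = fun j => reactionBinomial (kf j) (kb j) (μ j) (ν j) := funext hb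
  have hli := (linearIndependent_reactionBinomial kf kb μ ν hkf hdisj).restrict_scalars' ℤ
  exact funext (Fintype.linearIndependent_iffₛ.mp hli c c' h)

/-- Lemma 1: uniqueness of the sum-of-binomials representation.
If two integer coefficient families give the same linear combination of the
reaction binomials `b j` in `MvPolynomial (K ⊕ X) ℚ`, then they coincide. -/
theorem sum_of_binomials_representation_unique
    {K X σ : Type*} [Fintype σ]
    (kf kb : σ → K) (μ ν : σ → (X →₀ ℕ))
    (hkf : Function.Injective kf) (hkb : Function.Injective kb)
    (hdisj : Disjoint (Set.range kf) (Set.range kb))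
    (b : σ → MvPolynomial (K ⊕ X) ℚ)
    (hb : ∀ j, b j =
      MvPolynomial.monomial
        (Finsupp.single (Sum.inl (kf j)) 1 + Finsupp.mapDomain Sum.inr (μ j)) (-1 : ℚ) +
      MvPolynomial.monomial
        (Finsupp.single (Sum.inl (kb j)) 1 + Finsupp.mapDomain Sum.inr (ν j)) (1 : ℚ))
    (c c' : σ → ℤ)
    (h : ∑ j : σ, (c j) • b j = ∑ j : σ, (c' j) • b j) :
    c = c' :=
  sum_of_binomials_representation_unique_general kf kb μ ν hkf hdisj b hb c c' h
end

section
/- Reducibility forces a shared reaction binomial (the claim proved inside the paper's Theorem 1): fix a monomial order m on exponent vectors over K ⊕ X, and let p = Σ_{j ∈ σ} (c j) • b j and q = Σ_{j ∈ σ} (d j) • b j be nonzero, where c, d : σ → ℚ. If the leading monomial of p divides the leading monomial of q (i.e., m.degree p ≤ m.degree q componentwise as finitely supported functions), then m.degree p = m.degree q and there exists j ∈ σ with c j ≠ 0 and d j ≠ 0 such that m.degree p lies in the support of b j; that is, p and q share a common reaction binomial which contains both of their leading terms. -/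
/-!
Every exponent in the support of a combination `∑ j, c j • b j` is the source or target
exponent of some `b j` with `c j ≠ 0`. Each such exponent contains exactly one rate-constant
variable, to the first power, and no two of these exponents share that variable. So if the leading
exponent of `p` divides that of `q`, their rate-constant variables agree, which pins down the same
reaction and the same side of it, and hence the same exponent.
-/

/-- The leading exponent (multidegree) of a multivariate polynomial with
respect to a monomial order `m`: the `m`-maximum of the support. -/
noncomputable def MonomialOrder.deg {σ : Type*} (m : MonomialOrder σ)
    {R : Type*} [CommSemiring R] (p : MvPolynomial σ R) : σ →₀ ℕ :=
  m.toSyn.symm (p.support.sup fun α => m.toSyn α)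

namespace MvPolynomial

variable {σ R : Type*} [CommSemiring R]

theorem eq_or_eq_of_mem_support_monomial_add_monomial {a a' e : σ →₀ ℕ} {r r' : R}
    (he : e ∈ (monomial a r + monomial a' r').support) : e = a ∨ e = a' := by
  classical
  simpa using (support_add.trans
    (Finset.union_subset_union support_monomial_subset support_monomial_subset)) he

theorem exists_ne_zero_mem_support_of_mem_support_sum_smul {ι : Type*} {s : Finset ι}
    {c : ι → R} {f : ι → MvPolynomial σ R} {e : σ →₀ ℕ}
    (he : e ∈ (∑ j ∈ s, c j • f j).support) : ∃ j, c j ≠ 0 ∧ e ∈ (f j).support := by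
  classical
  obtain ⟨j, -, hj⟩ := Finset.mem_biUnion.mp (support_sum he)
  rw [mem_support_iff, coeff_smul, smul_eq_mul] at hj
  exact ⟨j, left_ne_zero_of_mul hj, mem_support_iff.mpr (right_ne_zero_of_mul hj)⟩

end MvPolynomial

open MvPolynomial

section MassAction

variable {K X : Type*}

/-- The exponent of the monomial `k · x^v` in `MvPolynomial (K ⊕ X)`. -/
noncomputable def rateMonomialExponent (k : K) (v : X →₀ ℕ) : K ⊕ X →₀ ℕ :=
  Finsupp.single (Sum.inl k) 1 + Finsupp.mapDomain Sum.inr v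

theorem rateMonomialExponent_apply_inl (k k' : K) (v : X →₀ ℕ) :
    rateMonomialExponent k v (Sum.inl k') = Finsupp.single k 1 k' := by
  have hv : Finsupp.mapDomain Sum.inr v (Sum.inl k') = 0 :=
    Finsupp.mapDomain_of_notMem_range _ _ (by simp)
  simp [rateMonomialExponent, hv, Finsupp.single_apply_left Sum.inl_injective]

theorem eq_of_rateMonomialExponent_le {k k' : K} {v w : X →₀ ℕ}
    (h : rateMonomialExponent k v ≤ rateMonomialExponent k' w) : k = k' := by
  have hk := h (Sum.inl k)
  rw [rateMonomialExponent_apply_inl, rateMonomialExponent_apply_inl] at hk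
  by_contra hne
  simp [Finsupp.single_eq_of_ne hne] at hk

theorem index_eq_and_eq_of_rateMonomialExponent_le {σ : Type*} {kf kb : σ → K} {μ ν : σ → X →₀ ℕ}
    (hkf : Function.Injective kf) (hkb : Function.Injective kb)
    (hdisj : Disjoint (Set.range kf) (Set.range kb))
    {i j : σ} {e e' : K ⊕ X →₀ ℕ}
    (he : e = rateMonomialExponent (kf i) (μ i) ∨ e = rateMonomialExponent (kb i) (ν i))
    (he' : e' = rateMonomialExponent (kf j) (μ j) ∨ e' = rateMonomialExponent (kb j) (ν j))
    (hle : e ≤ e') : i = j ∧ e = e' := by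
  rcases he with rfl | rfl <;> rcases he' with rfl | rfl <;>
    have hk := eq_of_rateMonomialExponent_le hle
  · obtain rfl := hkf hk; exact ⟨rfl, rfl⟩
  · exact (Set.disjoint_left.mp hdisj ⟨i, rfl⟩ ⟨j, hk.symm⟩).elim
  · exact (Set.disjoint_left.mp hdisj ⟨j, rfl⟩ ⟨i, hk⟩).elim
  · obtain rfl := hkb hk; exact ⟨rfl, rfl⟩

end MassAction

/-- claim inside Theorem 1: if `p` and `q` are nonzero linear
combinations of the reaction binomials and the leading monomial of `p` divides
the leading monomial of `q` (componentwise `≤` of exponent vectors), then the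
two leading exponents are equal and `p`, `q` share a common reaction binomial
`b j` (occurring with nonzero coefficient in both) whose support contains the
common leading exponent. -/
theorem reducible_implies_shared_binomial
    {K X σ : Type*} [Fintype σ]
    (kf kb : σ → K) (μ ν : σ → (X →₀ ℕ))
    (hkf : Function.Injective kf) (hkb : Function.Injective kb)
    (hdisj : Disjoint (Set.range kf) (Set.range kb))
    (b : σ → MvPolynomial (K ⊕ X) ℚ)
    (hb : ∀ j, b j =
      MvPolynomial.monomial
        (Finsupp.single (Sum.inl (kf j)) 1 + Finsupp.mapDomain Sum.inr (μ j)) (-1 : ℚ) +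
      MvPolynomial.monomial
        (Finsupp.single (Sum.inl (kb j)) 1 + Finsupp.mapDomain Sum.inr (ν j)) (1 : ℚ))
    (m : MonomialOrder (K ⊕ X))
    (c d : σ → ℚ)
    (p q : MvPolynomial (K ⊕ X) ℚ)
    (hp : p = ∑ j : σ, (c j) • b j) (hq : q = ∑ j : σ, (d j) • b j)
    (hp0 : p ≠ 0) (hq0 : q ≠ 0)
    (hdvd : m.deg p ≤ m.deg q) :
    m.deg p = m.deg q ∧
      ∃ j : σ, c j ≠ 0 ∧ d j ≠ 0 ∧ m.deg p ∈ (b j).support := by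
  have hsupp_b : ∀ j e, e ∈ (b j).support →
      e = rateMonomialExponent (kf j) (μ j) ∨ e = rateMonomialExponent (kb j) (ν j) :=
    fun j e he => eq_or_eq_of_mem_support_monomial_add_monomial (hb j ▸ he)
  -- `m.deg` is definitionally Mathlib's `m.degree`.
  have hp_lead : m.deg p ∈ (∑ j, c j • b j).support := hp ▸ (m.degree_mem_support_iff p).2 hp0
  have hq_lead : m.deg q ∈ (∑ j, d j • b j).support := hq ▸ (m.degree_mem_support_iff q).2 hq0
  obtain ⟨i, hci, hi⟩ := exists_ne_zero_mem_support_of_mem_support_sum_smul hp_lead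
  obtain ⟨j, hdj, hj⟩ := exists_ne_zero_mem_support_of_mem_support_sum_smul hq_lead
  obtain ⟨rfl, hpq⟩ := index_eq_and_eq_of_rateMonomialExponent_le hkf hkb hdisj
    (hsupp_b i _ hi) (hsupp_b j _ hj) hdvd
  exact ⟨hpq, i, hci, hdj, hi⟩
end

section
/- Sufficiency direction of Theorem 1, with explicit generators: assume X is finite, and suppose there is a set S ⊆ σ such that the row space of the binomial coefficient matrix c (the ℚ-linear span of the rows c x = (μ j x − ν j x)_{j ∈ σ} in (σ → ℚ)) equals the ℚ-linear span of the standard basis vectors { Pi.single j 1 : j ∈ S }. Then the steady state ideal I = Ideal.span { p x : x ∈ X }, where p x = Σ_{j ∈ σ} ((μ j x : ℤ) − ν j x) • b j, equals Ideal.span { b j : j ∈ S }. In particular, since each b j has exactly two monomials, I is unconditionally binomial, i.e., generated by a set of binomials in MvPolynomial (K ⊕ X) ℚ. -/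
/-! Both the steady-state polynomials and the binomials `b j` are images of vectors in `σ → ℚ`
under one linear map `v ↦ ∑ j, v j • b j`: `p x` is the image of the row `c x` and `b j` that of
`Pi.single j 1`. The ideal generated by the image of a set only depends on the linear span of
that set, so equal row spaces give equal ideals. Each `b j` has two distinct monomials since
they involve the distinct rate constants `kf j` and `kb j`. -/

open MvPolynomial

theorem Ideal.span_image_span {R M A : Type*} [CommRing R] [AddCommGroup M] [Module R M]
    [CommRing A] [Algebra R A] (φ : M →ₗ[R] A) (s : Set M) :
    Ideal.span (φ '' Submodule.span R s) = Ideal.span (φ '' s) := by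
  refine le_antisymm (Ideal.span_le.2 ?_) (Ideal.span_mono (Set.image_mono Submodule.subset_span))
  rintro _ ⟨v, hv, rfl⟩
  have hφv : φ v ∈ Submodule.span R (φ '' s) := by
    rw [← Submodule.map_span]
    exact Submodule.mem_map_of_mem hv
  exact Submodule.span_le_restrictScalars R A _ hφv

theorem Ideal.span_image_eq_of_span_eq {R M A : Type*} [CommRing R] [AddCommGroup M]
    [Module R M] [CommRing A] [Algebra R A] (φ : M →ₗ[R] A) {s t : Set M}
    (h : Submodule.span R s = Submodule.span R t) :
    Ideal.span (φ '' s) = Ideal.span (φ '' t) := by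
  rw [← Ideal.span_image_span, h, Ideal.span_image_span]

theorem MvPolynomial.card_support_monomial_add_monomial {R τ : Type*} [CommSemiring R]
    {m m' : τ →₀ ℕ} (h : m ≠ m') {a a' : R} (ha : a ≠ 0) (ha' : a' ≠ 0) :
    (monomial m a + monomial m' a').support.card = 2 := by
  classical
  change (Finsupp.single m a + Finsupp.single m' a').support.card = 2
  rw [Finsupp.support_single_add_single h ha ha', Finset.card_pair h]

theorem Finsupp.single_inl_add_mapDomain_inr_ne {α β : Type*} {k k' : α} (h : k ≠ k')
    (f g : β →₀ ℕ) :
    Finsupp.single (Sum.inl k) 1 + Finsupp.mapDomain Sum.inr f ≠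
      Finsupp.single (Sum.inl k') 1 + Finsupp.mapDomain Sum.inr g := by
  intro heq
  have hinl : ∀ (u : β →₀ ℕ), Finsupp.mapDomain Sum.inr u (Sum.inl k : α ⊕ β) = 0 :=
    fun u => Finsupp.mapDomain_of_notMem_range _ _ (by simp)
  simpa [hinl, Finsupp.single_apply, Ne.symm h] using DFunLike.congr_fun heq (Sum.inl k)

theorem steady_state_ideal_binomial_of_row_space_general
    {K X σ : Type*} [Fintype σ] [DecidableEq σ]
    (kf kb : σ → K) (μ ν : σ → (X →₀ ℕ))
    (hdisj : Disjoint (Set.range kf) (Set.range kb))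
    (b : σ → MvPolynomial (K ⊕ X) ℚ)
    (hb : ∀ j, b j =
      MvPolynomial.monomial
        (Finsupp.single (Sum.inl (kf j)) 1 + Finsupp.mapDomain Sum.inr (μ j)) (-1 : ℚ) +
      MvPolynomial.monomial
        (Finsupp.single (Sum.inl (kb j)) 1 + Finsupp.mapDomain Sum.inr (ν j)) (1 : ℚ))
    (p : X → MvPolynomial (K ⊕ X) ℚ)
    (hp : ∀ x, p x = ∑ j : σ, ((μ j x : ℤ) - (ν j x : ℤ)) • b j)
    (c : X → σ → ℚ)
    (hc : ∀ x j, c x j = (μ j x : ℚ) - (ν j x : ℚ))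
    (S : Set σ)
    (hS : Submodule.span ℚ (Set.range c) =
      Submodule.span ℚ ((fun j => Pi.single j (1 : ℚ)) '' S)) :
    Ideal.span (Set.range p) = Ideal.span (b '' S) ∧
      ∃ B : Set (MvPolynomial (K ⊕ X) ℚ),
        (∀ f ∈ B, f.support.card = 2) ∧
        Ideal.span (Set.range p) = Ideal.span B := by
  let φ := Fintype.linearCombination ℚ b
  have hpφ : Set.range p = φ '' Set.range c := by
    rw [← Set.range_comp]
    congr 1
    funext x
    simp only [Function.comp_apply, φ, Fintype.linearCombination_apply, hp, hc,
      ← Int.cast_smul_eq_zsmul ℚ]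
    push_cast
    rfl
  have hbφ : b '' S = φ '' ((fun j => Pi.single j (1 : ℚ)) '' S) := by
    simp only [Set.image_image, φ, Fintype.linearCombination_apply_single, one_smul]
  have hspan : Ideal.span (Set.range p) = Ideal.span (b '' S) := by
    rw [hpφ, hbφ]
    exact Ideal.span_image_eq_of_span_eq φ hS
  refine ⟨hspan, b '' S, ?_, hspan⟩
  rintro _ ⟨j, -, rfl⟩
  have hkj : kf j ≠ kb j := fun h => Set.disjoint_left.1 hdisj ⟨j, rfl⟩ ⟨j, h.symm⟩
  rw [hb]
  exact card_support_monomial_add_monomial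
    (Finsupp.single_inl_add_mapDomain_inr_ne hkj _ _) (by norm_num) one_ne_zero

/-- sufficiency direction of Theorem 1, with explicit
generators: if the row space of the binomial coefficient matrix `c` equals
the span of the standard basis vectors indexed by `S ⊆ σ`, then the steady
state ideal equals the ideal generated by the binomials `b j`, `j ∈ S`; in
particular it is unconditionally binomial. -/
theorem steady_state_ideal_binomial_of_row_space
    {K X σ : Type*} [Fintype σ] [Fintype X] [DecidableEq σ]
    (kf kb : σ → K) (μ ν : σ → (X →₀ ℕ))
    (hkf : Function.Injective kf) (hkb : Function.Injective kb)
    (hdisj : Disjoint (Set.range kf) (Set.range kb))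
    (b : σ → MvPolynomial (K ⊕ X) ℚ)
    (hb : ∀ j, b j =
      MvPolynomial.monomial
        (Finsupp.single (Sum.inl (kf j)) 1 + Finsupp.mapDomain Sum.inr (μ j)) (-1 : ℚ) +
      MvPolynomial.monomial
        (Finsupp.single (Sum.inl (kb j)) 1 + Finsupp.mapDomain Sum.inr (ν j)) (1 : ℚ))
    (p : X → MvPolynomial (K ⊕ X) ℚ)
    (hp : ∀ x, p x = ∑ j : σ, ((μ j x : ℤ) - (ν j x : ℤ)) • b j)
    (c : X → σ → ℚ)
    (hc : ∀ x j, c x j = (μ j x : ℚ) - (ν j x : ℚ))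
    (S : Set σ)
    (hS : Submodule.span ℚ (Set.range c) =
      Submodule.span ℚ ((fun j => Pi.single j (1 : ℚ)) '' S)) :
    Ideal.span (Set.range p) = Ideal.span (b '' S) ∧
      ∃ B : Set (MvPolynomial (K ⊕ X) ℚ),
        (∀ f ∈ B, f.support.card = 2) ∧
        Ideal.span (Set.range p) = Ideal.span B :=
  steady_state_ideal_binomial_of_row_space_general kf kb μ ν hdisj b hb p hp c hc S hS
end

section
/- Theorem 1 (main theorem): assume X is finite. The steady state ideal I = Ideal.span { p x : x ∈ X } of the reversible chemical reaction network is unconditionally binomial — i.e., there exists a set B of polynomials in MvPolynomial (K ⊕ X) ℚ, each having support of cardinality exactly two, with I = Ideal.span B — if and only if there exists a set S ⊆ σ such that the row space of the binomial coefficient matrix c equals the ℚ-linear span of the standard basis vectors { Pi.single j 1 : j ∈ S }. (The right-hand condition is the paper's condition that the reduced row echelon form of the binomial coefficient matrix has at most one nonzero entry in each row.) -/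
/-!
Every reaction monomial `kf j · x^μⱼ`, `kb j · x^νⱼ` contains its own rate constant, so none of
them divides another. Hence in `f = ∑ⱼ Gⱼ bⱼ` the coefficient of `kf j · x^μⱼ` is `-Gⱼ(0)` and that
of `kb j · x^νⱼ` is `Gⱼ(0)`, so the vector `Λ f` of source coefficients (`sourceCoeffs`) satisfies
`Λ (r f) = r(0) • Λ f`, and `Λ` maps the ideal generated by any `B ⊆ (b)` into the `ℚ`-span of
`Λ B`. For `B = {p x}` this span is the row space of `c`, because `Λ (p x) = -c x`. If `f` has only
two terms and `(Λ f)ⱼ ≠ 0`, these terms are `kf j · x^μⱼ` and `kb j · x^νⱼ`, so `Λ f` is a multiple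
of the basis vector `eⱼ`. Thus a generating set of binomials shows that the row space is spanned by
the `eⱼ` it contains. Conversely, if the row space is spanned by `{eⱼ : j ∈ S}`, the `p x` and the
`bⱼ` with `j ∈ S` span the same `ℚ`-space, hence the same ideal.
-/

open MvPolynomial Function Set Submodule

theorem Submodule.eq_span_single_one_of_le_span {k ι : Type*} [Field k] [DecidableEq ι]
    {W : Submodule k (ι → k)} {V : Set (ι → k)} (hVW : V ⊆ W)
    (hV : ∀ v ∈ V, ∀ j, v j ≠ 0 → v = Pi.single j (v j)) (hWV : W ≤ span k V) :
    W = span k ((fun j => Pi.single j 1) '' {j | Pi.single j (1 : k) ∈ W}) := by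
  refine le_antisymm (hWV.trans (span_le.2 fun v hv => ?_)) (span_le.2 ?_)
  · obtain rfl | ⟨j, hj⟩ := eq_or_ne v 0 |>.imp_right Function.ne_iff.1
    · exact zero_mem _
    have hsingle : v = v j • Pi.single j 1 := by
      rw [← Pi.single_smul', smul_eq_mul, mul_one]
      exact hV v hv j hj
    generalize v j = a at hsingle hj
    subst hsingle
    have hjW : Pi.single j 1 ∈ W := by
      simpa [smul_smul, inv_mul_cancel₀ hj] using W.smul_mem a⁻¹ (hVW hv)
    exact smul_mem _ _ (subset_span ⟨j, hjW, rfl⟩)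
  · rintro _ ⟨j, hj, rfl⟩
    exact hj

theorem Ideal.span_range_sum_smul_eq_span_image {k ι X A : Type*} [CommSemiring k] [Semiring A]
    [Algebra k A] [Fintype ι] [DecidableEq ι] (b : ι → A) (c : X → ι → k) {S : Set ι}
    (h : Submodule.span k (range c) = Submodule.span k ((fun j => Pi.single j 1) '' S)) :
    Ideal.span (range fun x => ∑ i, c x i • b i) = Ideal.span (b '' S) := by
  set L := Fintype.linearCombination k b
  have hspan : ∀ s, Ideal.span (L '' s) = Ideal.span (Submodule.map L (Submodule.span k s)) :=
    fun s => by
      rw [← span_image, Ideal.span, Ideal.span, span_span_of_tower]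
  have hp : (range fun x => ∑ i, c x i • b i) = L '' range c := by
    rw [← range_comp]
    rfl
  have hb : b '' S = L '' ((fun j => Pi.single j 1) '' S) := by
    rw [image_image]
    simp [L, Fintype.linearCombination_apply_single]
  rw [hp, hb, hspan, hspan, h]

namespace MvPolynomial

variable {k S ι : Type*}

-- `e (.inl i)` and `e (.inr i)` are the exponents of the source and target monomials of
-- reaction `i`.
noncomputable def reactionBinomial [CommRing k] (e : ι ⊕ ι → S →₀ ℕ) (i : ι) : MvPolynomial S k :=
  monomial (e (.inl i)) (-1) + monomial (e (.inr i)) 1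

noncomputable def sourceCoeffs [CommRing k] (e : ι ⊕ ι → S →₀ ℕ) :
    MvPolynomial S k →ₗ[k] ι → k :=
  LinearMap.pi fun i => lcoeff k (e (.inl i))

@[simp]
theorem sourceCoeffs_apply [CommRing k] (e : ι ⊕ ι → S →₀ ℕ) (f : MvPolynomial S k) (i : ι) :
    sourceCoeffs e f i = coeff (e (.inl i)) f :=
  rfl

theorem coeff_mul_monomial_self [CommSemiring k] (g : MvPolynomial S k) (m : S →₀ ℕ) (r : k) :
    coeff m (g * monomial m r) = constantCoeff g * r := by
  simp [coeff_mul_monomial', constantCoeff_eq]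

theorem coeff_mul_monomial_of_not_le [CommSemiring k] (g : MvPolynomial S k) {m m' : S →₀ ℕ}
    (h : ¬m' ≤ m) (r : k) :
    coeff m (g * monomial m' r) = 0 := by
  simp [coeff_mul_monomial', h]

section CommRing

variable [CommRing k] [DecidableEq ι] {e : ι ⊕ ι → S →₀ ℕ} (he : ∀ a a', e a ≤ e a' → a = a')
include he

theorem coeff_inl_mul_reactionBinomial (g : MvPolynomial S k) (i j : ι) :
    coeff (e (.inl j)) (g * reactionBinomial e i) = if i = j then -constantCoeff g else 0 := by
  have hr : ¬e (.inr i) ≤ e (.inl j) := fun h => Sum.inr_ne_inl (he _ _ h)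
  rw [reactionBinomial, mul_add, coeff_add, coeff_mul_monomial_of_not_le g hr, add_zero]
  split_ifs with h
  · subst h
    rw [coeff_mul_monomial_self, mul_neg_one]
  · exact coeff_mul_monomial_of_not_le g (fun hle => h (Sum.inl_injective (he _ _ hle))) _

theorem coeff_inr_mul_reactionBinomial (g : MvPolynomial S k) (i j : ι) :
    coeff (e (.inr j)) (g * reactionBinomial e i) = if i = j then constantCoeff g else 0 := by
  have hl : ¬e (.inl i) ≤ e (.inr j) := fun h => Sum.inl_ne_inr (he _ _ h)
  rw [reactionBinomial, mul_add, coeff_add, coeff_mul_monomial_of_not_le g hl, zero_add]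
  split_ifs with h
  · subst h
    rw [coeff_mul_monomial_self, mul_one]
  · exact coeff_mul_monomial_of_not_le g (fun hle => h (Sum.inr_injective (he _ _ hle))) _

omit [DecidableEq ι] in
theorem card_support_reactionBinomial [Nontrivial k] (i : ι) :
    (reactionBinomial (k := k) e i).support.card = 2 := by
  classical
  have hne : e (.inl i) ≠ e (.inr i) := fun h => Sum.inl_ne_inr (he _ _ h.le)
  have hsupp : (reactionBinomial (k := k) e i).support = {e (.inl i), e (.inr i)} := by
    ext m
    by_cases h₁ : e (.inl i) = m <;> by_cases h₂ : e (.inr i) = m <;>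
      simp_all [reactionBinomial, coeff_monomial, eq_comm]
  rw [hsupp, Finset.card_pair hne]

variable [Fintype ι]

theorem coeff_inl_sum_mul_reactionBinomial (G : ι → MvPolynomial S k) (j : ι) :
    coeff (e (.inl j)) (∑ i, G i * reactionBinomial e i) = -constantCoeff (G j) := by
  simp [coeff_sum, coeff_inl_mul_reactionBinomial he]

theorem coeff_inr_sum_mul_reactionBinomial (G : ι → MvPolynomial S k) (j : ι) :
    coeff (e (.inr j)) (∑ i, G i * reactionBinomial e i) = constantCoeff (G j) := by
  simp [coeff_sum, coeff_inr_mul_reactionBinomial he]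

theorem sourceCoeffs_mul {f : MvPolynomial S k}
    (hf : f ∈ Ideal.span (range (reactionBinomial e))) (r : MvPolynomial S k) :
    sourceCoeffs e (r * f) = constantCoeff r • sourceCoeffs e f := by
  obtain ⟨G, rfl⟩ := Ideal.mem_span_range_iff_exists_fun.1 hf
  ext j
  simp_rw [Finset.mul_sum, ← mul_assoc]
  rw [Pi.smul_apply, sourceCoeffs_apply, sourceCoeffs_apply, coeff_inl_sum_mul_reactionBinomial he,
    coeff_inl_sum_mul_reactionBinomial he, map_mul, smul_eq_mul, mul_neg]

theorem coeff_inr_eq_neg_sourceCoeffs {f : MvPolynomial S k}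
    (hf : f ∈ Ideal.span (range (reactionBinomial e))) (j : ι) :
    coeff (e (.inr j)) f = -sourceCoeffs e f j := by
  obtain ⟨G, rfl⟩ := Ideal.mem_span_range_iff_exists_fun.1 hf
  rw [sourceCoeffs_apply, coeff_inl_sum_mul_reactionBinomial he,
    coeff_inr_sum_mul_reactionBinomial he, neg_neg]

theorem sourceCoeffs_eq_single {f : MvPolynomial S k}
    (hf : f ∈ Ideal.span (range (reactionBinomial e))) (hcard : f.support.card ≤ 2) {j : ι}
    (hj : sourceCoeffs e f j ≠ 0) : sourceCoeffs e f = Pi.single j (sourceCoeffs e f j) := by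
  have he_inj : Injective e := fun a a' h => he a a' h.le
  ext i
  rcases eq_or_ne i j with rfl | hij
  · rw [Pi.single_eq_same]
  rw [Pi.single_eq_of_ne hij]
  by_contra hi
  have hjr : coeff (e (.inr j)) f ≠ 0 := by
    rwa [coeff_inr_eq_neg_sourceCoeffs he hf, neg_ne_zero]
  refine hcard.not_gt (Finset.two_lt_card.2 ⟨_, mem_support_iff.2 hi, _, mem_support_iff.2 hj,
    _, mem_support_iff.2 hjr, ?_, ?_, ?_⟩) <;>
    simp [he_inj.eq_iff, hij]

theorem sourceCoeffs_mem_span_image {s : Set (MvPolynomial S k)}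
    (hs : Ideal.span s ≤ Ideal.span (range (reactionBinomial e))) {f : MvPolynomial S k}
    (hf : f ∈ Ideal.span s) : sourceCoeffs e f ∈ span k (sourceCoeffs e '' s) := by
  induction hf using Submodule.span_induction with
  | mem f hf => exact subset_span (mem_image_of_mem _ hf)
  | zero => simp
  | add f g _ _ hf hg => simpa using add_mem hf hg
  | smul r f hfs hf =>
    rw [smul_eq_mul, sourceCoeffs_mul he (hs hfs)]
    exact smul_mem _ _ hf

end CommRing

variable [Field k] [Fintype ι] [DecidableEq ι] {e : ι ⊕ ι → S →₀ ℕ}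

theorem span_range_eq_span_single_of_ideal_span_eq {X : Type*}
    (he : ∀ a a', e a ≤ e a' → a = a') (c : X → ι → k) {B : Set (MvPolynomial S k)}
    (hB : ∀ f ∈ B, f.support.card = 2)
    (hI : Ideal.span (range fun x => ∑ i, c x i • reactionBinomial e i) = Ideal.span B) :
    span k (range c) =
      span k ((fun j => Pi.single j 1) '' {j | Pi.single j (1 : k) ∈ span k (range c)}) := by
  set p : X → MvPolynomial S k := fun x => ∑ i, c x i • reactionBinomial e i
  have hp : ∀ x, sourceCoeffs e (p x) = -c x := fun x => by
    ext j
    simp_rw [p, smul_eq_C_mul, sourceCoeffs_apply, coeff_inl_sum_mul_reactionBinomial he,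
      constantCoeff_C, Pi.neg_apply]
  have hpb : Ideal.span (range p) ≤ Ideal.span (range (reactionBinomial e)) :=
    Ideal.span_le.2 <| range_subset_iff.2 fun x =>
      sum_mem fun i _ => smul_of_tower_mem _ _ (Ideal.subset_span (mem_range_self i))
  have hBb : Ideal.span B ≤ Ideal.span (range (reactionBinomial e)) := hI ▸ hpb
  refine eq_span_single_one_of_le_span (V := sourceCoeffs e '' B) ?_ ?_ ?_
  · rintro _ ⟨f, hf, rfl⟩
    refine span_le.2 ?_ (sourceCoeffs_mem_span_image he hpb (hI ▸ Ideal.subset_span hf))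
    rintro _ ⟨_, ⟨x, rfl⟩, rfl⟩
    rw [hp]
    exact neg_mem (subset_span ⟨x, rfl⟩)
  · rintro _ ⟨f, hf, rfl⟩ j hj
    exact sourceCoeffs_eq_single he (hBb (Ideal.subset_span hf)) (hB f hf).le hj
  · refine span_le.2 ?_
    rintro _ ⟨x, rfl⟩
    have hx := sourceCoeffs_mem_span_image he hBb (hI ▸ Ideal.subset_span (mem_range_self x))
    rw [hp] at hx
    simpa using neg_mem hx

end MvPolynomial

section RateExponent

variable {K X ι : Type*}

noncomputable def rateExponent (κ : ι → K) (ρ : ι → X →₀ ℕ) (a : ι) : K ⊕ X →₀ ℕ :=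
  Finsupp.single (.inl (κ a)) 1 + Finsupp.mapDomain Sum.inr (ρ a)

theorem eq_of_rateExponent_le {κ : ι → K} (hκ : Injective κ) (ρ : ι → X →₀ ℕ) {a a' : ι}
    (h : rateExponent κ ρ a ≤ rateExponent κ ρ a') : a = a' := by
  classical
  have h₁ := h (.inl (κ a))
  simp [rateExponent, Finsupp.mapDomain_of_notMem_range, Finsupp.single_apply] at h₁
  split_ifs at h₁ with hκa
  · exact (hκ hκa).symm
  · exact absurd h₁ (by norm_num)

end RateExponent

theorem steady_state_ideal_binomial_iff_general
    {K X σ : Type*} [Fintype σ] [DecidableEq σ]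
    (kf kb : σ → K) (μ ν : σ → (X →₀ ℕ))
    (hkf : Function.Injective kf) (hkb : Function.Injective kb)
    (hdisj : Disjoint (Set.range kf) (Set.range kb))
    (b : σ → MvPolynomial (K ⊕ X) ℚ)
    (hb : ∀ j, b j =
      MvPolynomial.monomial
        (Finsupp.single (Sum.inl (kf j)) 1 + Finsupp.mapDomain Sum.inr (μ j)) (-1 : ℚ) +
      MvPolynomial.monomial
        (Finsupp.single (Sum.inl (kb j)) 1 + Finsupp.mapDomain Sum.inr (ν j)) (1 : ℚ))
    (p : X → MvPolynomial (K ⊕ X) ℚ)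
    (hp : ∀ x, p x = ∑ j : σ, ((μ j x : ℤ) - (ν j x : ℤ)) • b j)
    (c : X → σ → ℚ)
    (hc : ∀ x j, c x j = (μ j x : ℚ) - (ν j x : ℚ)) :
    (∃ B : Set (MvPolynomial (K ⊕ X) ℚ),
        (∀ f ∈ B, f.support.card = 2) ∧
        Ideal.span (Set.range p) = Ideal.span B) ↔
      (∃ S : Set σ, Submodule.span ℚ (Set.range c) =
        Submodule.span ℚ ((fun j => Pi.single j (1 : ℚ)) '' S)) := by
  set e := rateExponent (Sum.elim kf kb) (Sum.elim μ ν)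
  have he : ∀ a a', e a ≤ e a' → a = a' := fun _ _ =>
    eq_of_rateExponent_le (hkf.sumElim hkb fun i j h =>
      Set.disjoint_left.1 hdisj ⟨i, rfl⟩ ⟨j, h.symm⟩) _
  obtain rfl : b = reactionBinomial e := funext hb
  obtain rfl : p = fun x => ∑ j, c x j • reactionBinomial e j := funext fun x => by
    rw [hp]
    refine Finset.sum_congr rfl fun j _ => ?_
    rw [hc, ← Int.cast_smul_eq_zsmul ℚ]
    push_cast
    rfl
  constructor
  · rintro ⟨B, hB, hI⟩
    exact ⟨_, span_range_eq_span_single_of_ideal_span_eq he c hB hI⟩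
  · rintro ⟨S, hS⟩
    refine ⟨_, ?_, Ideal.span_range_sum_smul_eq_span_image _ c hS⟩
    rintro _ ⟨j, -, rfl⟩
    exact card_support_reactionBinomial he j

/-- Theorem 1, main theorem: the steady state ideal of a
reversible chemical reaction network is unconditionally binomial (generated
by a set of polynomials each having exactly two monomials) if and only if the
row space of its binomial coefficient matrix is the span of a set of standard
basis vectors (equivalently, the reduced row echelon form of the matrix has
at most one nonzero entry in each row). -/
theorem steady_state_ideal_binomial_iff
    {K X σ : Type*} [Fintype σ] [Fintype X] [DecidableEq σ]
    (kf kb : σ → K) (μ ν : σ → (X →₀ ℕ))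
    (hkf : Function.Injective kf) (hkb : Function.Injective kb)
    (hdisj : Disjoint (Set.range kf) (Set.range kb))
    (b : σ → MvPolynomial (K ⊕ X) ℚ)
    (hb : ∀ j, b j =
      MvPolynomial.monomial
        (Finsupp.single (Sum.inl (kf j)) 1 + Finsupp.mapDomain Sum.inr (μ j)) (-1 : ℚ) +
      MvPolynomial.monomial
        (Finsupp.single (Sum.inl (kb j)) 1 + Finsupp.mapDomain Sum.inr (ν j)) (1 : ℚ))
    (p : X → MvPolynomial (K ⊕ X) ℚ)
    (hp : ∀ x, p x = ∑ j : σ, ((μ j x : ℤ) - (ν j x : ℤ)) • b j)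
    (c : X → σ → ℚ)
    (hc : ∀ x j, c x j = (μ j x : ℚ) - (ν j x : ℚ)) :
    (∃ B : Set (MvPolynomial (K ⊕ X) ℚ),
        (∀ f ∈ B, f.support.card = 2) ∧
        Ideal.span (Set.range p) = Ideal.span B) ↔
      (∃ S : Set σ, Submodule.span ℚ (Set.range c) =
        Submodule.span ℚ ((fun j => Pi.single j (1 : ℚ)) '' S)) :=
  steady_state_ideal_binomial_iff_general kf kb μ ν hkf hkb hdisj b hb p hp c hc
end

section
/- Non-binomiality of the triangle network (Example 3): in the polynomial ring ℚ[k12, k21, k13, k31, k23, k32, x1, x2] (formalized as MvPolynomial (Fin 8) ℚ with the variables in this order), define p1 := −2·k12·x1² + 2·k21·x2² − k13·x1² + k31·x1·x2 + k23·x2² − k32·x1·x2 and p2 := −p1. Then the steady state ideal Ideal.span {p1, p2} is not unconditionally binomial: there is no set B of polynomials, each having support of cardinality exactly two, with Ideal.span {p1, p2} = Ideal.span B. -/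
open MvPolynomial

/- Variables of `MvPolynomial (Fin 8) ℚ`, in order:
   k12 = X 0, k21 = X 1, k13 = X 2, k31 = X 3, k23 = X 4, k32 = X 5,
   x1 = X 6, x2 = X 7. -/

/-- `q1 = −2·k12·x1² + 2·k21·x2² − k13·x1² + k31·x1·x2 + k23·x2² − k32·x1·x2`,
the right-hand side of the ODE for the concentration of `A` in the triangle
network `2A ⇌ 2B`, `2A ⇌ A + B`, `A + B ⇌ 2B`. -/
noncomputable def q1 : MvPolynomial (Fin 8) ℚ :=
  -2 * X 0 * X 6 ^ 2 + 2 * X 1 * X 7 ^ 2 - X 2 * X 6 ^ 2 + X 3 * X 6 * X 7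
    + X 4 * X 7 ^ 2 - X 5 * X 6 * X 7

/-- `q2 = −q1`. -/
noncomputable def q2 : MvPolynomial (Fin 8) ℚ := -q1

namespace TriangleAux

open Finsupp

abbrev S := MvPolynomial (Fin 8) ℚ

/-- Multiplicativity of weighted homogeneous components at extremal levels. -/
lemma whc_mul_eq (w : Fin 8 → ℕ) (f g : S) (a b : ℕ)
    (hfg : ∀ u ∈ f.support, ∀ v ∈ g.support,
      weight w u + weight w v = a + b → weight w u = a ∧ weight w v = b) :
    weightedHomogeneousComponent w (a + b) (f * g)
      = weightedHomogeneousComponent w a f * weightedHomogeneousComponent w b g := by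
  classical
  ext d
  rw [coeff_weightedHomogeneousComponent, coeff_mul, coeff_mul]
  split_ifs with hd
  · apply Finset.sum_congr rfl
    intro x hx
    rw [Finset.HasAntidiagonal.mem_antidiagonal] at hx
    rw [coeff_weightedHomogeneousComponent, coeff_weightedHomogeneousComponent]
    by_cases h1 : coeff x.1 f = 0
    · simp [h1]
    by_cases h2 : coeff x.2 g = 0
    · simp [h2]
    have hw : weight w x.1 + weight w x.2 = a + b := by
      rw [← map_add, hx, hd]
    obtain ⟨w1, w2⟩ := hfg x.1 (MvPolynomial.mem_support_iff.mpr h1) x.2 (MvPolynomial.mem_support_iff.mpr h2) hw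
    rw [if_pos w1, if_pos w2]
  · symm
    apply Finset.sum_eq_zero
    intro x hx
    rw [Finset.HasAntidiagonal.mem_antidiagonal] at hx
    rw [coeff_weightedHomogeneousComponent, coeff_weightedHomogeneousComponent]
    split_ifs with h1 h2
    · exact absurd (by rw [← hx, map_add, h1, h2]) hd
    all_goals simp

lemma whc_eq_zero_of_ne (w : Fin 8 → ℕ) (f : S) (n : ℕ)
    (h : ∀ e ∈ f.support, weight w e ≠ n) :
    weightedHomogeneousComponent w n f = 0 := by
  classical
  ext d
  rw [coeff_weightedHomogeneousComponent, coeff_zero]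
  split_ifs with hd
  · by_contra hc
    exact h d (MvPolynomial.mem_support_iff.mpr hc) hd
  · rfl

lemma whc_ne_zero (w : Fin 8 → ℕ) (f : S) (n : ℕ)
    (h : ∃ e ∈ f.support, weight w e = n) :
    weightedHomogeneousComponent w n f ≠ 0 := by
  classical
  obtain ⟨e, he, hwe⟩ := h
  intro hc
  have := coeff_weightedHomogeneousComponent (w := w) n f e
  rw [hc, coeff_zero, if_pos hwe] at this
  exact MvPolynomial.mem_support_iff.mp he this.symm

lemma support_whc_subset (w : Fin 8 → ℕ) (f : S) (n : ℕ) :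
    (weightedHomogeneousComponent w n f).support ⊆ f.support := by
  classical
  intro d hd
  rw [MvPolynomial.mem_support_iff] at hd ⊢
  intro hc
  rw [coeff_weightedHomogeneousComponent] at hd
  apply hd
  split_ifs <;> simp [hc]

lemma isWH_of_support (w : Fin 8 → ℕ) (f : S) (a : ℕ)
    (h : ∀ e ∈ f.support, weight w e = a) : f.IsWeightedHomogeneous w a :=
  fun _ hd => h _ (MvPolynomial.mem_support_iff.mpr hd)

/-- The master lemma: if `f = fT + fM + fB` with `fT` weighted homogeneous of top
degree `a`, `fB` weighted homogeneous of bottom degree `b < a`, and `fM` supported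
strictly in between, then for any nonzero `g` the support of `g * f` contains
disjoint copies of supports of `g1 * fT` and `g2 * fB` for some nonzero `g1, g2`. -/
lemma master (w : Fin 8 → ℕ) (g fT fM fB : S) (a b : ℕ)
    (hg : g ≠ 0) (hab : b < a)
    (hT : fT.IsWeightedHomogeneous w a) (hB : fB.IsWeightedHomogeneous w b)
    (hM : ∀ e ∈ fM.support, b < weight w e ∧ weight w e < a) :
    ∃ g1 g2 : S, g1 ≠ 0 ∧ g2 ≠ 0 ∧
      (g1 * fT).support.card + (g2 * fB).support.card
        ≤ (g * (fT + fM + fB)).support.card := by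
  classical
  have hgsupp : g.support.Nonempty := support_nonempty.mpr hg
  have hAne : (g.support.image (weight w)).Nonempty := hgsupp.image _
  set T := (g.support.image (weight w)).max' hAne with hTdef
  set t := (g.support.image (weight w)).min' hAne with htdef
  have hle : ∀ e ∈ g.support, weight w e ≤ T := fun e he =>
    Finset.le_max' _ _ (Finset.mem_image_of_mem _ he)
  have hge : ∀ e ∈ g.support, t ≤ weight w e := fun e he =>
    Finset.min'_le _ _ (Finset.mem_image_of_mem _ he)
  have htT : t ≤ T := Finset.min'_le _ _ (Finset.max'_mem _ _)
  set gT := weightedHomogeneousComponent w T g with hgT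
  set gB := weightedHomogeneousComponent w t g with hgB
  have hgTne : gT ≠ 0 := by
    apply whc_ne_zero
    obtain ⟨e, he, hwe⟩ := Finset.mem_image.mp (Finset.max'_mem _ hAne)
    exact ⟨e, he, hwe⟩
  have hgBne : gB ≠ 0 := by
    apply whc_ne_zero
    obtain ⟨e, he, hwe⟩ := Finset.mem_image.mp (Finset.min'_mem _ hAne)
    exact ⟨e, he, hwe⟩
  -- top component of the product
  have htop : weightedHomogeneousComponent w (T + a) (g * (fT + fM + fB)) = gT * fT := by
    rw [mul_add, mul_add, map_add, map_add]
    have h1 : weightedHomogeneousComponent w (T + a) (g * fT) = gT * fT := by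
      rw [whc_mul_eq w g fT T a]
      · rw [hT.weightedHomogeneousComponent_same]
      · intro u hu v hv hsum
        have hva : weight w v = a := hT (MvPolynomial.mem_support_iff.mp hv)
        have := hle u hu
        omega
    have h2 : weightedHomogeneousComponent w (T + a) (g * fM) = 0 := by
      apply whc_eq_zero_of_ne
      intro e he
      obtain ⟨u, hu, v, hv, rfl⟩ := Finset.mem_add.mp (MvPolynomial.support_mul g fM he)
      have := hle u hu
      have := (hM v hv).2
      rw [map_add]
      omega
    have h3 : weightedHomogeneousComponent w (T + a) (g * fB) = 0 := by
      apply whc_eq_zero_of_ne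
      intro e he
      obtain ⟨u, hu, v, hv, rfl⟩ := Finset.mem_add.mp (MvPolynomial.support_mul g fB he)
      have := hle u hu
      have := hB (MvPolynomial.mem_support_iff.mp hv)
      rw [map_add]
      omega
    rw [h1, h2, h3, add_zero, add_zero]
  -- bottom component of the product
  have hbot : weightedHomogeneousComponent w (t + b) (g * (fT + fM + fB)) = gB * fB := by
    rw [mul_add, mul_add, map_add, map_add]
    have h1 : weightedHomogeneousComponent w (t + b) (g * fB) = gB * fB := by
      rw [whc_mul_eq w g fB t b]
      · rw [hB.weightedHomogeneousComponent_same]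
      · intro u hu v hv hsum
        have hvb : weight w v = b := hB (MvPolynomial.mem_support_iff.mp hv)
        have := hge u hu
        omega
    have h2 : weightedHomogeneousComponent w (t + b) (g * fM) = 0 := by
      apply whc_eq_zero_of_ne
      intro e he
      obtain ⟨u, hu, v, hv, rfl⟩ := Finset.mem_add.mp (MvPolynomial.support_mul g fM he)
      have := hge u hu
      have := (hM v hv).1
      rw [map_add]
      omega
    have h3 : weightedHomogeneousComponent w (t + b) (g * fT) = 0 := by
      apply whc_eq_zero_of_ne
      intro e he
      obtain ⟨u, hu, v, hv, rfl⟩ := Finset.mem_add.mp (MvPolynomial.support_mul g fT he)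
      have := hge u hu
      have := hT (MvPolynomial.mem_support_iff.mp hv)
      rw [map_add]
      omega
    rw [h1, h2, h3, add_zero, zero_add]
  refine ⟨gT, gB, hgTne, hgBne, ?_⟩
  have hsub1 : (gT * fT).support ⊆ (g * (fT + fM + fB)).support := by
    rw [← htop]; exact support_whc_subset ..
  have hsub2 : (gB * fB).support ⊆ (g * (fT + fM + fB)).support := by
    rw [← hbot]; exact support_whc_subset ..
  have hdisj : Disjoint (gT * fT).support (gB * fB).support := by
    rw [Finset.disjoint_left]
    intro e he1 he2
    have h1 : weight w e = T + a := by
      rw [← htop] at he1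
      exact (weightedHomogeneousComponent_isWeightedHomogeneous (T + a)
        (g * (fT + fM + fB))) (MvPolynomial.mem_support_iff.mp he1)
    have h2 : weight w e = t + b := by
      rw [← hbot] at he2
      exact (weightedHomogeneousComponent_isWeightedHomogeneous (t + b)
        (g * (fT + fM + fB))) (MvPolynomial.mem_support_iff.mp he2)
    omega
  calc (gT * fT).support.card + (gB * fB).support.card
      = ((gT * fT).support ∪ (gB * fB).support).card :=
        (Finset.card_union_of_disjoint hdisj).symm
    _ ≤ (g * (fT + fM + fB)).support.card :=
        Finset.card_le_card (Finset.union_subset hsub1 hsub2)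

lemma weight_single (w : Fin 8 → ℕ) (i : Fin 8) (n : ℕ) :
    weight w (Finsupp.single i n) = n * w i := by
  simp [weight_apply, Finsupp.sum_single_index]

/-- A nonzero multiple of a binomial `C c1 * X i + C c2 * X j` has at least two
monomials. -/
lemma card_mul_binomial (i j : Fin 8) (hij : i ≠ j) (c1 c2 : ℚ)
    (h1 : c1 ≠ 0) (h2 : c2 ≠ 0) (u : S) (hu : u ≠ 0) :
    2 ≤ (u * (C c1 * X i + C c2 * X j)).support.card := by
  classical
  set w : Fin 8 → ℕ := fun k => if k = i then 1 else 0 with hw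
  have hwsi : weight w (Finsupp.single i 1) = 1 := by
    rw [weight_single]; simp [hw]
  have hwsj : weight w (Finsupp.single j 1) = 0 := by
    rw [weight_single]; simp [hw, hij.symm]
  have hT : (C c1 * X i : S).IsWeightedHomogeneous w 1 := by
    rw [C_mul_X_eq_monomial]
    exact isWeightedHomogeneous_monomial _ _ _ hwsi
  have hB : (C c2 * X j : S).IsWeightedHomogeneous w 0 := by
    rw [C_mul_X_eq_monomial]
    exact isWeightedHomogeneous_monomial _ _ _ hwsj
  obtain ⟨g1, g2, hg1, hg2, hcard⟩ :=
    master w u (C c1 * X i) 0 (C c2 * X j) 1 0 hu Nat.zero_lt_one hT hB (by simp)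
  have heq : u * (C c1 * X i + 0 + C c2 * X j) = u * (C c1 * X i + C c2 * X j) := by
    ring
  rw [heq] at hcard
  have hXi : (C c1 * X i : S) ≠ 0 :=
    mul_ne_zero (by simpa using h1) (X_ne_zero i)
  have hXj : (C c2 * X j : S) ≠ 0 :=
    mul_ne_zero (by simpa using h2) (X_ne_zero j)
  have hc1 : 1 ≤ (g1 * (C c1 * X i)).support.card :=
    Finset.card_pos.mpr (support_nonempty.mpr (mul_ne_zero hg1 hXi))
  have hc2 : 1 ≤ (g2 * (C c2 * X j)).support.card :=
    Finset.card_pos.mpr (support_nonempty.mpr (mul_ne_zero hg2 hXj))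
  omega

/-- The weight vector recording `2·(degree in x1) + (degree in x2)`. -/
noncomputable def wT : Fin 8 → ℕ := fun i => if i = 6 then 2 else if i = 7 then 1 else 0

noncomputable def fT : S := C (-2) * X 0 * X 6 ^ 2 + C (-1) * X 2 * X 6 ^ 2
noncomputable def fM : S := C 1 * X 3 * X 6 * X 7 + C (-1) * X 5 * X 6 * X 7
noncomputable def fB : S := C 2 * X 1 * X 7 ^ 2 + C 1 * X 4 * X 7 ^ 2

lemma q1_eq : q1 = fT + fM + fB := by
  simp only [q1, fT, fM, fB, map_neg, map_ofNat, map_one]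
  ring

lemma mono_conv (c : ℚ) (i j : Fin 8) :
    C c * X i * X j ^ 2 = monomial (Finsupp.single i 1 + Finsupp.single j 2) c := by
  rw [C_mul_X_eq_monomial, X_pow_eq_monomial, monomial_mul, mul_one]

lemma mono_conv3 (c : ℚ) (i j k : Fin 8) :
    C c * X i * X j * X k
      = monomial (Finsupp.single i 1 + Finsupp.single j 1 + Finsupp.single k 1) c := by
  rw [C_mul_X_eq_monomial, X, monomial_mul, mul_one, X, monomial_mul, mul_one]

lemma supp_two (e1 e2 : Fin 8 →₀ ℕ) (c1 c2 : ℚ) :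
    ((monomial e1 c1 + monomial e2 c2 : S)).support ⊆ {e1, e2} := by
  classical
  refine (MvPolynomial.support_add).trans ?_
  intro e he
  rcases Finset.mem_union.mp he with h | h
  · exact Finset.mem_insert.mpr (Or.inl (Finset.mem_singleton.mp (support_monomial_subset h)))
  · exact Finset.mem_insert.mpr (Or.inr (support_monomial_subset h))

lemma hT_q1 : fT.IsWeightedHomogeneous wT 4 := by
  apply isWH_of_support
  intro e he
  rw [fT, mono_conv, mono_conv] at he
  rcases Finset.mem_insert.mp (supp_two _ _ _ _ he) with rfl | h
  · simp [map_add, weight_single, wT]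
  · rw [Finset.mem_singleton] at h
    subst h
    simp [map_add, weight_single, wT]

lemma hB_q1 : fB.IsWeightedHomogeneous wT 2 := by
  apply isWH_of_support
  intro e he
  rw [fB, mono_conv, mono_conv] at he
  rcases Finset.mem_insert.mp (supp_two _ _ _ _ he) with rfl | h
  · simp [map_add, weight_single, wT]
  · rw [Finset.mem_singleton] at h
    subst h
    simp [map_add, weight_single, wT]

lemma hM_q1 : ∀ e ∈ fM.support, 2 < weight wT e ∧ weight wT e < 4 := by
  intro e he
  rw [fM, mono_conv3, mono_conv3] at he
  rcases Finset.mem_insert.mp (supp_two _ _ _ _ he) with rfl | h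
  · simp [map_add, weight_single, wT]
  · rw [Finset.mem_singleton] at h
    subst h
    simp [map_add, weight_single, wT]

lemma q1_ne_zero : q1 ≠ 0 := by
  intro h
  have := congrArg (eval (fun i : Fin 8 => if i = 0 ∨ i = 6 then (1 : ℚ) else 0)) h
  simp [q1] at this

/-- No nonzero multiple of `q1` has exactly two monomials. -/
lemma card_mul_q1 (g : S) (hg : g ≠ 0) : 4 ≤ (g * q1).support.card := by
  obtain ⟨g1, g2, hg1, hg2, hcard⟩ :=
    master wT g fT fM fB 4 2 hg (by norm_num) hT_q1 hB_q1 hM_q1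
  rw [← q1_eq] at hcard
  have e1 : g1 * fT = (g1 * (C (-1) * X 6 ^ 2)) * (C 2 * X 0 + C 1 * X 2) := by
    rw [fT]; simp only [map_neg, map_one, map_ofNat]; ring
  have e2 : g2 * fB = (g2 * (C 1 * X 7 ^ 2)) * (C 2 * X 1 + C 1 * X 4) := by
    rw [fB]; simp only [map_neg, map_one, map_ofNat]; ring
  have hu1 : g1 * (C (-1) * X 6 ^ 2) ≠ 0 :=
    mul_ne_zero hg1 (mul_ne_zero (by norm_num) (pow_ne_zero _ (X_ne_zero _)))
  have hu2 : g2 * (C 1 * X 7 ^ 2) ≠ 0 :=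
    mul_ne_zero hg2 (mul_ne_zero (by norm_num) (pow_ne_zero _ (X_ne_zero _)))
  have hc1 : 2 ≤ (g1 * fT).support.card := by
    rw [e1]
    exact card_mul_binomial 0 2 (by decide) 2 1 two_ne_zero one_ne_zero _ hu1
  have hc2 : 2 ≤ (g2 * fB).support.card := by
    rw [e2]
    exact card_mul_binomial 1 4 (by decide) 2 1 two_ne_zero one_ne_zero _ hu2
  omega

end TriangleAux

/-- the steady state ideal of the triangle network is not
unconditionally binomial: it is not generated by any set of polynomials each
having exactly two monomials. -/
theorem triangle_network_not_binomial :
    ¬ ∃ B : Set (MvPolynomial (Fin 8) ℚ),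
        (∀ f ∈ B, f.support.card = 2) ∧
        Ideal.span {q1, q2} = Ideal.span B := by
  rintro ⟨B, hB, hspan⟩
  have hq1mem : q1 ∈ Ideal.span B := by
    rw [← hspan]
    exact Ideal.subset_span (Set.mem_insert _ _)
  have hBne : B.Nonempty := by
    by_contra hbe
    rw [Set.not_nonempty_iff_eq_empty] at hbe
    rw [hbe, Ideal.span_empty] at hq1mem
    exact TriangleAux.q1_ne_zero (by simpa using hq1mem)
  obtain ⟨f, hfB⟩ := hBne
  have hf2 : f.support.card = 2 := hB f hfB
  have hfne : f ≠ 0 := by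
    intro h
    rw [h] at hf2
    simp at hf2
  have hfmem : f ∈ Ideal.span {q1, q2} := by
    rw [hspan]
    exact Ideal.subset_span hfB
  have hle : Ideal.span {q1, q2} ≤ Ideal.span {q1} := by
    rw [Ideal.span_le]
    rintro x hx
    rcases hx with rfl | hx
    · exact Ideal.subset_span rfl
    · rw [Set.mem_singleton_iff] at hx
      subst hx
      rw [q2]
      exact neg_mem (Ideal.subset_span rfl)
  obtain ⟨g, hg⟩ := Ideal.mem_span_singleton.mp (hle hfmem)
  have hgne : g ≠ 0 := by
    intro h
    rw [h, mul_zero] at hg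
    exact hfne hg
  have h4 : 4 ≤ f.support.card := by
    rw [hg, mul_comm]
    exact TriangleAux.card_mul_q1 g hgne
  omega
end
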